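/- arXiv:2306.00493 — 5 statements merged into one kernel-verified Lean document; each statement's English description precedes it below -/
import Mathlib

section
/- Let S be a finite monoid and A a finite set. For every set Q ⊆ SRel(A) of S-relations on A, the S-relational clone generated by Q equals the Galois closure of Q: [Q]_S = SInv(SPol Q). -/
namespace SPreclone

/-- An `S`-operation on `A`: an `(n+1)`-ary operation together with a signum
assigning an element of `S` to each argument. -/
structure SOp (S A : Type*) where
  n : ℕ
  fn : (Fin (n + 1) → A) → A
  sgn : Fin (n + 1) → S

/-- An `S`-relation on `A`: a family of `(m+1)`-ary relations indexed by `S`. -/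
structure SRel (S A : Type*) where
  m : ℕ
  rel : S → Set (Fin (m + 1) → A)

section

variable {S A : Type*} [Monoid S]

/-- `f` S-preserves `ρ`. -/
def SPreserves (f : SOp S A) (ρ : SRel S A) : Prop :=
  ∀ s : S, ∀ r : Fin (f.n + 1) → (Fin (ρ.m + 1) → A),
    (∀ i, r i ∈ ρ.rel (f.sgn i * s)) →
    (fun j => f.fn fun i => r i j) ∈ ρ.rel s

/-- `S`-polymorphisms of a set of `S`-relations. -/
def SPol (Q : Set (SRel S A)) : Set (SOp S A) := { f | ∀ ρ ∈ Q, SPreserves f ρ }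

/-- Invariant `S`-relations of a set of `S`-operations. -/
def SInv (F : Set (SOp S A)) : Set (SRel S A) := { ρ | ∀ f ∈ F, SPreserves f ρ }

/-- The identity operation, with signum `(e)`. -/
def idOp (S A : Type*) [Monoid S] : SOp S A := ⟨0, fun x => x 0, fun _ => 1⟩

/-- Cyclic shift `ζ` of the arguments (and the signa). -/
def cycOp (f : SOp S A) : SOp S A :=
  ⟨f.n, fun x => f.fn fun j => x (j + 1), fun i => f.sgn (i - 1)⟩

/-- Transposition `τ` of the first two arguments (and their signa). -/
def swapOp (f : SOp S A) : SOp S A :=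
  ⟨f.n, fun x => f.fn fun j => x (Equiv.swap 0 1 j), fun i => f.sgn (Equiv.swap 0 1 i)⟩

/-- `∇^s`: adding a fictitious first argument with signum `s`. -/
def nablaOp (s : S) (f : SOp S A) : SOp S A :=
  ⟨f.n + 1, fun x => f.fn fun j => x j.succ, Fin.cases (motive := fun _ => S) s f.sgn⟩

open Classical in
/-- `Δ`: identification of the first two arguments when they have the same signum
(otherwise, and for unary operations, `Δ f := f`). -/
noncomputable def deltaOp (f : SOp S A) : SOp S A :=
  match f with
  | ⟨0, fn, sgn⟩ => ⟨0, fn, sgn⟩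
  | ⟨m + 1, fn, sgn⟩ =>
    if sgn 0 = sgn 1 then
      ⟨m, fun x => fn fun j => x ⟨j.val - 1, by have := j.isLt; omega⟩,
        fun i => sgn i.succ⟩
    else ⟨m + 1, fn, sgn⟩

/-- Composition `(f ∘ g)(x₁,…,x_m,x_{m+1},…,x_{m+n-1}) = f(g(x₁,…,x_m),x_{m+1},…,x_{m+n-1})`,
with signum `(s'₁s₁, …, s'_m s₁, s₂, …, s_n)`. -/
def compOp (f g : SOp S A) : SOp S A :=
  ⟨g.n + f.n,
   fun x => f.fn fun k => Fin.cases (motive := fun _ => A)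
     (g.fn fun i => x ⟨i.val, by have := i.isLt; omega⟩)
     (fun j => x ⟨g.n + 1 + j.val, by have := j.isLt; omega⟩) k,
   fun i =>
     if h : i.val < g.n + 1 then g.sgn ⟨i.val, h⟩ * f.sgn 0
     else f.sgn ⟨i.val - g.n, by have := i.isLt; omega⟩⟩

/-- A set of `S`-operations is an `S`-preclone if it contains the identity and is closed
under `ζ`, `τ`, `∇^s`, `Δ` and composition. -/
def IsSPreclone (F : Set (SOp S A)) : Prop :=
  idOp S A ∈ F ∧
  (∀ f ∈ F, cycOp f ∈ F) ∧
  (∀ f ∈ F, swapOp f ∈ F) ∧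
  (∀ (s : S), ∀ f ∈ F, nablaOp s f ∈ F) ∧
  (∀ f ∈ F, deltaOp f ∈ F) ∧
  (∀ f ∈ F, ∀ g ∈ F, compOp f g ∈ F)

/-- The `S`-preclone generated by `F` (the least `S`-preclone containing `F`). -/
def SSg (F : Set (SOp S A)) : Set (SOp S A) := ⋂₀ { G | IsSPreclone G ∧ F ⊆ G }

/-- `δ^S := (Δ_A)_{s ∈ S}`. -/
def deltaS (S A : Type*) : SRel S A := ⟨1, fun _ => { a | a 0 = a 1 }⟩

/-- Componentwise cyclic shift of coordinates. -/
def cycRel (ρ : SRel S A) : SRel S A :=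
  ⟨ρ.m, fun s => { b | (fun i => b (i - 1)) ∈ ρ.rel s }⟩

/-- Componentwise transposition of the first two coordinates. -/
def swapRel (ρ : SRel S A) : SRel S A :=
  ⟨ρ.m, fun s => { b | (fun i => b (Equiv.swap 0 1 i)) ∈ ρ.rel s }⟩

/-- Componentwise deletion of the first coordinate (identity on unary relations). -/
def prRel (ρ : SRel S A) : SRel S A :=
  match ρ with
  | ⟨0, r⟩ => ⟨0, r⟩
  | ⟨m + 1, r⟩ => ⟨m, fun s => { b | ∃ a ∈ r s, b = fun j => a j.succ }⟩

/-- Componentwise Cartesian product. -/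
def prodRel (ρ ρ' : SRel S A) : SRel S A :=
  ⟨ρ.m + ρ'.m + 1, fun s =>
    { c | (fun i : Fin (ρ.m + 1) => c ⟨i.val, by have := i.isLt; omega⟩) ∈ ρ.rel s ∧
          (fun i : Fin (ρ'.m + 1) => c ⟨ρ.m + 1 + i.val, by have := i.isLt; omega⟩) ∈ ρ'.rel s }⟩

/-- Componentwise intersection; empty if the arities differ. -/
def interRel (ρ ρ' : SRel S A) : SRel S A :=
  if h : ρ.m = ρ'.m then
    ⟨ρ.m, fun s => { a | a ∈ ρ.rel s ∧
        (fun i : Fin (ρ'.m + 1) => a (Fin.cast (by omega) i)) ∈ ρ'.rel s }⟩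
  else ⟨ρ.m, fun _ => ∅⟩

/-- Index translation `μ_v(ρ) := (ρ_{sv})_{s ∈ S}`. -/
def muRel (v : S) (ρ : SRel S A) : SRel S A := ⟨ρ.m, fun s => ρ.rel (s * v)⟩

/-- `v`-self-intersection `(⊓^v ρ)_s := ⋂ { ρ_{s'} ∣ s'v = s }`
(an empty intersection being the full relation). -/
def selfInterRel (v : S) (ρ : SRel S A) : SRel S A :=
  ⟨ρ.m, fun s => { a | ∀ s' : S, s' * v = s → a ∈ ρ.rel s' }⟩

/-- A set of `S`-relations is an `S`-relational clone if it contains `δ^S` and is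
closed under `ζ`, `τ`, `pr`, `×`, `∧`, `μ_v` and `⊓^v`. -/
def IsSRelClone (Q : Set (SRel S A)) : Prop :=
  deltaS S A ∈ Q ∧
  (∀ ρ ∈ Q, cycRel ρ ∈ Q) ∧
  (∀ ρ ∈ Q, swapRel ρ ∈ Q) ∧
  (∀ ρ ∈ Q, prRel ρ ∈ Q) ∧
  (∀ ρ ∈ Q, ∀ ρ' ∈ Q, prodRel ρ ρ' ∈ Q) ∧
  (∀ ρ ∈ Q, ∀ ρ' ∈ Q, interRel ρ ρ' ∈ Q) ∧
  (∀ (v : S), ∀ ρ ∈ Q, muRel v ρ ∈ Q) ∧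
  (∀ (v : S), ∀ ρ ∈ Q, selfInterRel v ρ ∈ Q)

/-- The `S`-relational clone generated by `Q`. -/
def SRg (Q : Set (SRel S A)) : Set (SRel S A) := ⋂₀ { R | IsSRelClone R ∧ Q ⊆ R }

/-- `Γ_F(ρ)`: the least `S`-relation of the same arity containing `ρ` and invariant
for `F` (defined as the intersection of all such). -/
def Gamma (F : Set (SOp S A)) (ρ : SRel S A) : SRel S A :=
  ⟨ρ.m, fun s => ⋂ g ∈ { g : S → Set (Fin (ρ.m + 1) → A) |
      (⟨ρ.m, g⟩ : SRel S A) ∈ SInv F ∧ ∀ t, ρ.rel t ⊆ g t }, g s⟩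

/-- Trivial `S`-operations (trivial projections): projections whose essential
argument has signum `e`. -/
def SJ (S A : Type*) [Monoid S] : Set (SOp S A) :=
  { f | ∃ i : Fin (f.n + 1), f.sgn i = 1 ∧ ∀ x, f.fn x = x i }

/-- A diagonal relation: empty, or defined by an equivalence relation on the coordinates. -/
def IsDiagonal {A : Type*} {m : ℕ} (σ : Set (Fin m → A)) : Prop :=
  σ = ∅ ∨ ∃ ε : Fin m → Fin m → Prop, Equivalence ε ∧ σ = { a | ∀ i j, ε i j → a i = a j }

/-- `S`-diagonal `S`-relations. -/
def SD (S A : Type*) [Monoid S] : Set (SRel S A) :=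
  { ρ | (∀ s, IsDiagonal (ρ.rel s)) ∧
      ∀ s t : S, ({ x | ∃ u, x = u * s } : Set S) ⊆ { x | ∃ u, x = u * t } →
        ρ.rel s ⊆ ρ.rel t }

/-- Projection of an `S`-relation to the rows `z 0, …, z t` (componentwise). -/
def prMulti {t : ℕ} (ρ : SRel S A) (z : Fin (t + 1) → Fin (ρ.m + 1)) : SRel S A :=
  ⟨t, fun s => { b | ∃ a ∈ ρ.rel s, b = fun j => a (z j) }⟩

/-- One step of the inductive construction of `Γ_F(ρ)`:
`R s ∪ { f(r₁,…,r_n) ∣ f ∈ F, r_j ∈ R (sgn(f)_j * s) }`. -/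
def gammaStep (F : Set (SOp S A)) {m : ℕ}
    (R : S → Set (Fin (m + 1) → A)) : S → Set (Fin (m + 1) → A) :=
  fun s => R s ∪ { b | ∃ f ∈ F, ∃ r : Fin (f.n + 1) → (Fin (m + 1) → A),
    (∀ j, r j ∈ R (f.sgn j * s)) ∧ b = fun z => f.fn fun j => r j z }

/-- `χ` is (a presentation of) the `S`-relation `χ^λ`: its rows are enumerated by
*all* tuples of `A^n` via `e`, and its `s`-component consists exactly of the columns
`κ_i` with `λ i = s`. -/
def IsChi {n : ℕ} (lam : Fin n → S) (χ : SRel S A) : Prop :=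
  ∃ e : Fin (χ.m + 1) ≃ (Fin n → A),
    ∀ s, χ.rel s = { c | ∃ i, lam i = s ∧ c = fun z => e z i }

/-- `γ_Q(ρ)`: the least `S`-relation of the same arity containing `ρ` and belonging
to the `S`-relational clone generated by `Q` (defined as the intersection of all such). -/
def gammaQ (Q : Set (SRel S A)) (ρ : SRel S A) : SRel S A :=
  ⟨ρ.m, fun s => ⋂ g ∈ { g : S → Set (Fin (ρ.m + 1) → A) |
      (⟨ρ.m, g⟩ : SRel S A) ∈ SRg Q ∧ ∀ t, ρ.rel t ⊆ g t }, g s⟩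

/-- `π`-dual of an `S`-operation. -/
def opPi (π : Equiv.Perm A) (f : SOp S A) : SOp S A :=
  ⟨f.n, fun x => π (f.fn fun i => π.symm (x i)), f.sgn⟩

/-- `π`-dual of an `S`-relation. -/
def relPi (π : Equiv.Perm A) (ρ : SRel S A) : SRel S A :=
  ⟨ρ.m, fun s => { b | ∃ a ∈ ρ.rel s, b = fun i => π (a i) }⟩

/-- `h`-dual of an `S`-operation (only the signum changes). -/
def opH (h : S ≃* S) (f : SOp S A) : SOp S A :=
  ⟨f.n, f.fn, fun i => h (f.sgn i)⟩

/-- `h`-dual of an `S`-relation: `ρ^h := (ρ_{h⁻¹(s)})_{s ∈ S}`. -/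
def relH (h : S ≃* S) (ρ : SRel S A) : SRel S A :=
  ⟨ρ.m, fun s => ρ.rel (h.symm s)⟩

end

/-- An ordinary (unsigned) operation on `A`. -/
structure UOp (A : Type*) where
  n : ℕ
  fn : (Fin (n + 1) → A) → A

/-- An ordinary (unsigned) relation on `A`. -/
structure URel (A : Type*) where
  m : ℕ
  rel : Set (Fin (m + 1) → A)

/-- Ordinary preservation of a relation by an operation. -/
def UPreserves {A : Type*} (f : UOp A) (σ : URel A) : Prop :=
  ∀ r : Fin (f.n + 1) → (Fin (σ.m + 1) → A),
    (∀ i, r i ∈ σ.rel) → (fun j => f.fn fun i => r i j) ∈ σ.rel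

/-- Polymorphisms of a set of ordinary relations. -/
def UPol {A : Type*} (R : Set (URel A)) : Set (UOp A) := { f | ∀ σ ∈ R, UPreserves f σ }

/-- A clone: contains all projections and is closed under composition. -/
def IsClone {A : Type*} (C : Set (UOp A)) : Prop :=
  (∀ (n : ℕ) (i : Fin (n + 1)), (⟨n, fun x => x i⟩ : UOp A) ∈ C) ∧
  (∀ f ∈ C, ∀ (m : ℕ) (g : Fin (f.n + 1) → ((Fin (m + 1) → A) → A)),
    (∀ i, (⟨m, g i⟩ : UOp A) ∈ C) → (⟨m, fun x => f.fn fun i => g i x⟩ : UOp A) ∈ C)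

/-- The clone generated by a set of operations. -/
def CloneGen {A : Type*} (G : Set (UOp A)) : Set (UOp A) := ⋂₀ { C | IsClone C ∧ G ⊆ C }

/-!
`SInv F` is an `S`-relational clone for every `F`, which gives `[Q]_S ⊆ SInv (SPol Q)`.

For the converse let `ρ ∈ SInv (SPol Q)` and list its columns `a_i ∈ ρ_{t_i}` (`i ≤ n`). Index
coordinates by `A^{n+1}`, so that a tuple `c` is an `(n+1)`-ary operation, and let `Θ_s` consist of
those `c` with `c(r_0, …, r_n) ∈ ρ'_{s s₀}` whenever `ρ' ∈ Q` and `r_i ∈ ρ'_{t_i s₀}`. Being a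
finite intersection of minors of the `μ_{s₀} ρ'`, `Θ` lies in `[Q]_S`, and its `1`-component
consists of the polymorphisms of `Q` with signum `(t_i)`. Projecting `Θ` onto the coordinates
`(a_i(j))_i` gives `U ∈ [Q]_S` with `ρ ≤ U` (the `i`-th projection lies in `Θ_{t_i}`) and
`U_1 ⊆ ρ_1` (as `ρ` is invariant under those polymorphisms). Applied to `μ_s ρ` and followed by `⊓^s`, this yields
`T^s ∈ [Q]_S` with `ρ ≤ T^s` and `T^s_s ⊆ ρ_s`, so `ρ = ⋂_s T^s ∈ [Q]_S`.

Minors, projections and finite intersections are available in every `S`-relational clone because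
`ζ` and `τ` generate all permutations of the coordinates.
-/

open Set Equiv

section

variable {S A : Type*} [Monoid S]

theorem sPreserves_deltaS (f : SOp S A) : SPreserves f (deltaS S A) :=
  fun _ _ hr => congrArg f.fn (funext hr)

namespace SPreserves

variable {f : SOp S A} {ρ ρ' : SRel S A}

theorem cycRel (h : SPreserves f ρ) : SPreserves f (cycRel ρ) :=
  fun s r hr => h s (fun i j => r i (j - 1 : Fin (ρ.m + 1))) hr

theorem swapRel (h : SPreserves f ρ) : SPreserves f (swapRel ρ) :=
  fun s r hr => h s (fun i j => r i (swap 0 1 j)) hr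

theorem prRel (h : SPreserves f ρ) : SPreserves f (prRel ρ) := by
  obtain ⟨_ | m, R⟩ := ρ
  · exact h
  · intro s r hr
    choose a ha hra using hr
    obtain rfl : r = fun i j => a i j.succ := funext hra
    exact ⟨_, h s a ha, rfl⟩

theorem prodRel (h : SPreserves f ρ) (h' : SPreserves f ρ') : SPreserves f (prodRel ρ ρ') :=
  fun s _ hr => ⟨h s _ fun i => (hr i).1, h' s _ fun i => (hr i).2⟩

theorem interRel (h : SPreserves f ρ) (h' : SPreserves f ρ') :
    SPreserves f (interRel ρ ρ') := by
  unfold SPreclone.interRel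
  split_ifs with hm
  · exact fun s r hr => ⟨h s _ fun i => (hr i).1,
      h' s (fun i j => r i (Fin.cast (show ρ'.m + 1 = ρ.m + 1 by omega) j)) fun i => (hr i).2⟩
  · exact fun s r hr => (hr 0).elim

theorem muRel (h : SPreserves f ρ) (v : S) : SPreserves f (muRel v ρ) :=
  fun s r hr => h (s * v) r fun i => mul_assoc (f.sgn i) s v ▸ hr i

theorem selfInterRel (h : SPreserves f ρ) (v : S) : SPreserves f (selfInterRel v ρ) :=
  fun _ r hr s' hs' => h s' r fun i => hr i _ (by rw [mul_assoc, hs'])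

end SPreserves

theorem isSRelClone_SInv (F : Set (SOp S A)) : IsSRelClone (SInv F) :=
  ⟨fun f _ => sPreserves_deltaS f,
   fun _ h f hf => (h f hf).cycRel,
   fun _ h f hf => (h f hf).swapRel,
   fun _ h f hf => (h f hf).prRel,
   fun _ h _ h' f hf => (h f hf).prodRel (h' f hf),
   fun _ h _ h' f hf => (h f hf).interRel (h' f hf),
   fun v _ h f hf => (h f hf).muRel v,
   fun v _ h f hf => (h f hf).selfInterRel v⟩

theorem isSRelClone_SRg (Q : Set (SRel S A)) : IsSRelClone (SRg Q) :=
  ⟨fun _ hR => hR.1.1,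
   fun _ h _ hR => hR.1.2.1 _ (h _ hR),
   fun _ h _ hR => hR.1.2.2.1 _ (h _ hR),
   fun _ h _ hR => hR.1.2.2.2.1 _ (h _ hR),
   fun _ h _ h' _ hR => hR.1.2.2.2.2.1 _ (h _ hR) _ (h' _ hR),
   fun _ h _ h' _ hR => hR.1.2.2.2.2.2.1 _ (h _ hR) _ (h' _ hR),
   fun v _ h _ hR => hR.1.2.2.2.2.2.2.1 v _ (h _ hR),
   fun v _ h _ hR => hR.1.2.2.2.2.2.2.2 v _ (h _ hR)⟩

theorem subset_SRg (Q : Set (SRel S A)) : Q ⊆ SRg Q := fun _ h _ hR => hR.2 h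

theorem SRg_subset {Q R : Set (SRel S A)} (hR : IsSRelClone R) (hQ : Q ⊆ R) : SRg Q ⊆ R :=
  fun _ h => h R ⟨hR, hQ⟩

theorem SRg_subset_SInv_SPol (Q : Set (SRel S A)) : SRg Q ⊆ SInv (SPol Q) :=
  SRg_subset (isSRelClone_SInv _) fun _ hρ _ hf => hf _ hρ

end

theorem perm_mem_closure_subRight_one_swap {m : ℕ} (π : Perm (Fin (m + 1))) :
    π ∈ Submonoid.closure {Equiv.subRight 1, swap 0 1} := by
  rcases m with _ | m
  · exact Subsingleton.elim (α := Perm (Fin 1)) 1 π ▸ one_mem _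
  have hσ : Equiv.subRight (1 : Fin (m + 2)) = (finRotate (m + 2))⁻¹ := by
    refine Equiv.ext fun i => ?_
    rw [eq_comm, Perm.inv_eq_iff_eq, finRotate_apply, subRight_apply, sub_add_cancel]
  have hswap : swap (1 : Fin (m + 2)) (Equiv.subRight 1 1) = swap 0 1 := by
    rw [subRight_apply, sub_self, swap_comm]
  have htop := Perm.closure_cycle_adjacent_swap (hσ ▸ isCycle_finRotate.inv)
    (by rw [hσ, Perm.support_inv, support_finRotate]) 1
  rw [hswap] at htop
  rw [← Subgroup.closure_toSubmonoid_of_finite, htop]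
  trivial

theorem exists_perm_apply_eq_apply_eq {α : Type*} [DecidableEq α] {u₀ u₁ p q : α}
    (hu : u₀ ≠ u₁) (hpq : p ≠ q) : ∃ π : Perm α, π u₀ = p ∧ π u₁ = q := by
  set τ := swap u₀ p
  have hne : u₀ ≠ τ q := fun h => hpq <| by
    have := congrArg τ h
    rwa [swap_apply_left, swap_apply_self] at this
  refine ⟨τ * swap u₁ (τ q), ?_, ?_⟩
  · rw [Perm.mul_apply, swap_apply_of_ne_of_ne hu hne, swap_apply_left]
  · rw [Perm.mul_apply, swap_apply_left, swap_apply_self]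

theorem SRel.mk_mem_of_rel_eq {S A : Type*} {R : Set (SRel S A)} {m : ℕ}
    {g g' : S → Set (Fin (m + 1) → A)} (h : (⟨m, g⟩ : SRel S A) ∈ R) (e : ∀ s, g s = g' s) :
    (⟨m, g'⟩ : SRel S A) ∈ R :=
  funext e ▸ h

namespace IsSRelClone

variable {S A : Type*} [Monoid S] {R : Set (SRel S A)}

theorem univ_mem (hR : IsSRelClone R) (m : ℕ) :
    (⟨m, fun _ => univ⟩ : SRel S A) ∈ R := by
  have h₀ : (⟨0, fun _ => univ⟩ : SRel S A) ∈ R := by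
    refine SRel.mk_mem_of_rel_eq (hR.2.2.2.1 _ hR.1) fun s => ?_
    ext b
    exact iff_of_true
      ⟨fun _ => b 0, rfl, funext fun j => congrArg b (Subsingleton.elim (α := Fin 1) _ _)⟩ trivial
  induction m with
  | zero => exact h₀
  | succ m ih =>
    refine SRel.mk_mem_of_rel_eq (hR.2.2.2.2.1 _ ih _ h₀) fun s => ?_
    simp

theorem empty_mem (hR : IsSRelClone R) (m : ℕ) : (⟨m, fun _ => ∅⟩ : SRel S A) ∈ R := by
  have h := hR.2.2.2.2.2.1 _ (hR.univ_mem m) _ (hR.univ_mem (m + 1))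
  rwa [interRel, dif_neg (by simp)] at h

theorem inter_mem (hR : IsSRelClone R) {m : ℕ} {g g' : S → Set (Fin (m + 1) → A)}
    (h : (⟨m, g⟩ : SRel S A) ∈ R) (h' : (⟨m, g'⟩ : SRel S A) ∈ R) :
    (⟨m, fun s => g s ∩ g' s⟩ : SRel S A) ∈ R := by
  have h'' := hR.2.2.2.2.2.1 _ h _ h'
  rwa [interRel, dif_pos rfl] at h''

theorem iInter_mem (hR : IsSRelClone R) {m : ℕ} {ι : Type*} [Finite ι]
    (g : ι → S → Set (Fin (m + 1) → A)) (h : ∀ i, (⟨m, g i⟩ : SRel S A) ∈ R) :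
    (⟨m, fun s => ⋂ i, g i s⟩ : SRel S A) ∈ R := by
  classical
  cases nonempty_fintype ι
  suffices ∀ F : Finset ι, (⟨m, fun s => ⋂ i ∈ F, g i s⟩ : SRel S A) ∈ R by
    simpa using this Finset.univ
  intro F
  induction F using Finset.induction_on with
  | empty => simpa using hR.univ_mem m
  | insert i F _ ih => simpa [Finset.set_biInter_insert] using hR.inter_mem (h i) ih

theorem comp_perm_mem (hR : IsSRelClone R) {m : ℕ} {g : S → Set (Fin (m + 1) → A)}
    (h : (⟨m, g⟩ : SRel S A) ∈ R) (π : Perm (Fin (m + 1))) :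
    (⟨m, fun s => {b | b ∘ π ∈ g s}⟩ : SRel S A) ∈ R := by
  induction perm_mem_closure_subRight_one_swap π using Submonoid.closure_induction
    generalizing g with
  | mem σ hσ =>
    rcases hσ with rfl | rfl
    · exact hR.2.1 _ h
    · exact hR.2.2.1 _ h
  | one => exact h
  | mul σ τ _ _ hσ hτ => exact hσ (hτ h)

theorem eq_mem (hR : IsSRelClone R) {M : ℕ} {p q : Fin (M + 2)} (hpq : p ≠ q) :
    (⟨M + 1, fun _ => {x | x p = x q}⟩ : SRel S A) ∈ R := by
  have hlast :
      (⟨M + 1, fun _ => {x | x ⟨M, by omega⟩ = x ⟨M + 1, by omega⟩}⟩ : SRel S A) ∈ R := by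
    rcases M with _ | M
    · exact hR.1
    · refine SRel.mk_mem_of_rel_eq (hR.2.2.2.2.1 _ (hR.univ_mem M) _ hR.1) fun s => ?_
      simp only [mem_univ, true_and, deltaS]
      rfl
  obtain ⟨π, hπp, hπq⟩ := exists_perm_apply_eq_apply_eq
    (u₀ := ⟨M, by omega⟩) (u₁ := ⟨M + 1, by omega⟩) (by simp) hpq
  refine SRel.mk_mem_of_rel_eq (hR.comp_perm_mem hlast π) fun s => ?_
  simp [hπp, hπq]

theorem drop_mem (hR : IsSRelClone R) {M : ℕ} (k : ℕ) {N : ℕ} (hN : N = M + k)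
    {g : S → Set (Fin (N + 1) → A)} (h : (⟨N, g⟩ : SRel S A) ∈ R) :
    (⟨M, fun s => {b | ∃ a ∈ g s, b = fun i : Fin (M + 1) => a ⟨k + i, by omega⟩}⟩ : SRel S A) ∈
      R := by
  induction k generalizing N with
  | zero =>
    cases hN
    refine SRel.mk_mem_of_rel_eq h fun s => ?_
    ext b
    refine ⟨fun hb => ⟨b, hb, funext fun i => congrArg b (Fin.ext (by simp))⟩, ?_⟩
    rintro ⟨a, ha, rfl⟩
    convert ha using 1
    exact funext fun i => congrArg a (Fin.ext (by simp))
  | succ k ih =>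
    cases hN
    refine SRel.mk_mem_of_rel_eq (ih rfl (hR.2.2.2.1 _ h)) fun s => ?_
    ext b
    constructor
    · rintro ⟨_, ⟨a, ha, rfl⟩, rfl⟩
      exact ⟨a, ha, funext fun i => congrArg a (Fin.ext (by simp; omega))⟩
    · rintro ⟨a, ha, rfl⟩
      exact ⟨_, ⟨a, ha, rfl⟩, funext fun i => congrArg a (Fin.ext (by simp; omega))⟩

theorem agree_mem (hR : IsSRelClone R) {ρ : SRel S A} (h : ρ ∈ R) {M : ℕ}
    (E : Fin (ρ.m + 1) → Fin (M + 1) → Prop) :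
    (⟨M, fun s => {b | ∃ a ∈ ρ.rel s, ∀ i j, E i j → a i = b j}⟩ : SRel S A) ∈ R := by
  let D : {p : Fin (ρ.m + 1) × Fin (M + 1) // E p.1 p.2} → S → Set (Fin (ρ.m + M + 2) → A) :=
    fun p _ => {x | x ⟨p.1.1, by omega⟩ = x ⟨ρ.m + 1 + p.1.2, by omega⟩}
  have hD : ∀ p, (⟨ρ.m + M + 1, D p⟩ : SRel S A) ∈ R := fun p =>
    hR.eq_mem (by simp [Fin.ext_iff]; omega)
  have hT := hR.inter_mem (hR.2.2.2.2.1 _ h _ (hR.univ_mem M)) (hR.iInter_mem D hD)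
  refine SRel.mk_mem_of_rel_eq (hR.drop_mem (N := ρ.m + M + 1) (ρ.m + 1) (by omega) hT)
    fun s => ?_
  ext b
  simp only [mem_ofPred_eq, mem_inter_iff, mem_iInter, D, Subtype.forall, Prod.forall]
  constructor
  · rintro ⟨x, ⟨⟨hx, -⟩, hxE⟩, rfl⟩
    exact ⟨_, hx, fun i j hij => hxE i j hij⟩
  · rintro ⟨a, ha, haE⟩
    refine ⟨fun v => if hv : v.1 < ρ.m + 1 then a ⟨v, hv⟩ else b ⟨v - (ρ.m + 1), by omega⟩,
      ⟨⟨?_, trivial⟩, fun i j hij => ?_⟩, ?_⟩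
    · simpa (disch := omega) only [dif_pos] using ha
    · simpa (disch := omega) only [dif_pos, dif_neg, Nat.add_sub_cancel_left] using haE i j hij
    · ext j
      simp (disch := omega) only [dif_neg, Nat.add_sub_cancel_left]

theorem comap_mem (hR : IsSRelClone R) {ρ : SRel S A} (h : ρ ∈ R) {M : ℕ}
    (w : Fin (ρ.m + 1) → Fin (M + 1)) :
    (⟨M, fun s => {c | c ∘ w ∈ ρ.rel s}⟩ : SRel S A) ∈ R := by
  refine SRel.mk_mem_of_rel_eq (hR.agree_mem h fun i j => w i = j) fun s => ?_
  ext c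
  constructor
  · rintro ⟨a, ha, haE⟩
    rwa [show a = c ∘ w from funext fun i => haE i _ rfl] at ha
  · exact fun hc => ⟨_, hc, fun i j hij => hij ▸ rfl⟩

theorem prMulti_mem (hR : IsSRelClone R) {ρ : SRel S A} (h : ρ ∈ R) {t : ℕ}
    (z : Fin (t + 1) → Fin (ρ.m + 1)) : prMulti ρ z ∈ R := by
  refine SRel.mk_mem_of_rel_eq (hR.agree_mem h fun i j => i = z j) fun s => ?_
  ext b
  constructor
  · rintro ⟨a, ha, haE⟩
    exact ⟨a, ha, funext fun j => (haE _ j rfl).symm⟩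
  · rintro ⟨a, ha, rfl⟩
    exact ⟨a, ha, fun i j hij => hij ▸ rfl⟩

end IsSRelClone

theorem exists_fin_succ_equiv (α : Type*) [Finite α] [Nonempty α] :
    ∃ n, Nonempty (Fin (n + 1) ≃ α) := by
  obtain ⟨k, ⟨e⟩⟩ := Finite.exists_equiv_fin α
  rcases k with _ | n
  · exact (e (Classical.arbitrary α)).elim0
  · exact ⟨n, ⟨e.symm⟩⟩

section Polymorphisms

variable {S A : Type*} [Monoid S]

/-- Coordinates are indexed by `A^{n+1}` through `e`, so that a tuple `c` is an `(n+1)`-ary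
operation on `A`. -/
def polRel (Q : Set (SRel S A)) {n N : ℕ} (e : Fin (N + 1) ≃ (Fin (n + 1) → A))
    (sgn : Fin (n + 1) → S) : SRel S A :=
  ⟨N, fun s => {c | ∀ ρ ∈ Q, ∀ (s₀ : S) (r : Fin (n + 1) → Fin (ρ.m + 1) → A),
    (∀ i, r i ∈ ρ.rel (sgn i * s₀)) → (fun j => c (e.symm fun i => r i j)) ∈ ρ.rel (s * s₀)}⟩

theorem polRel_mem_SRg [Finite S] [Finite A] (Q : Set (SRel S A)) {n N : ℕ}
    (e : Fin (N + 1) ≃ (Fin (n + 1) → A)) (sgn : Fin (n + 1) → S) :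
    polRel Q e sgn ∈ SRg Q := by
  have hQ := isSRelClone_SRg Q
  let G : Set (S → Set (Fin (N + 1) → A)) :=
    {g | ∃ ρ ∈ Q, ∃ (s₀ : S) (r : Fin (n + 1) → Fin (ρ.m + 1) → A),
      (∀ i, r i ∈ ρ.rel (sgn i * s₀)) ∧
      g = fun s => {c | (fun j => c (e.symm fun i => r i j)) ∈ ρ.rel (s * s₀)}}
  have hG : ∀ g : G, (⟨N, g.1⟩ : SRel S A) ∈ SRg Q := by
    rintro ⟨_, ρ, hρ, s₀, r, -, rfl⟩
    exact hQ.comap_mem (hQ.2.2.2.2.2.2.1 s₀ _ (subset_SRg Q hρ)) _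
  refine SRel.mk_mem_of_rel_eq (hQ.iInter_mem (fun g : G => g.1) hG) fun s => ?_
  ext c
  simp only [mem_iInter, Subtype.forall, G, mem_ofPred_eq]
  exact ⟨fun hc ρ hρ s₀ r hr => hc _ ⟨ρ, hρ, s₀, r, hr, rfl⟩,
    by rintro hc _ ⟨ρ, hρ, s₀, r, hr, rfl⟩; exact hc ρ hρ s₀ r hr⟩

theorem mk_mem_SPol_iff_mem_polRel_one {Q : Set (SRel S A)} {n N : ℕ}
    (e : Fin (N + 1) ≃ (Fin (n + 1) → A)) (sgn : Fin (n + 1) → S) (c : Fin (N + 1) → A) :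
    (⟨n, fun x => c (e.symm x), sgn⟩ : SOp S A) ∈ SPol Q ↔ c ∈ (polRel Q e sgn).rel 1 := by
  simp only [SPol, SPreserves, polRel, one_mul]
  rfl

theorem eval_mem_polRel {Q : Set (SRel S A)} {n N : ℕ} (e : Fin (N + 1) ≃ (Fin (n + 1) → A))
    (sgn : Fin (n + 1) → S) (i₀ : Fin (n + 1)) :
    (fun v => e v i₀) ∈ (polRel Q e sgn).rel (sgn i₀) :=
  fun _ _ _ _ hr => by simpa using hr i₀

variable [Finite S] [Finite A] {Q : Set (SRel S A)} {ρ : SRel S A}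

theorem exists_SRg_ge_rel_one_subset (hρ : ρ ∈ SInv (SPol Q)) :
    ∃ U : S → Set (Fin (ρ.m + 1) → A), (⟨ρ.m, U⟩ : SRel S A) ∈ SRg Q ∧
      (∀ t, ρ.rel t ⊆ U t) ∧ U 1 ⊆ ρ.rel 1 := by
  let ι := {p : S × (Fin (ρ.m + 1) → A) // p.2 ∈ ρ.rel p.1}
  rcases isEmpty_or_nonempty ι with hι | hι
  · exact ⟨fun _ => ∅, (isSRelClone_SRg Q).empty_mem _,
      fun t a ha => hι.false ⟨(t, a), ha⟩, empty_subset _⟩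
  obtain ⟨n, ⟨col⟩⟩ := exists_fin_succ_equiv ι
  have : Nonempty A := ⟨(col 0).1.2 0⟩
  obtain ⟨N, ⟨e⟩⟩ := exists_fin_succ_equiv (Fin (n + 1) → A)
  let sgn i := (col i).1.1
  refine ⟨(prMulti (polRel Q e sgn) fun j => e.symm fun i => (col i).1.2 j).rel,
    (isSRelClone_SRg Q).prMulti_mem (polRel_mem_SRg Q e sgn) _, fun t a ha => ?_, ?_⟩
  · obtain ⟨i₀, hi₀⟩ := col.surjective ⟨(t, a), ha⟩
    refine ⟨fun v => e v i₀, ?_, ?_⟩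
    · obtain rfl : sgn i₀ = t := by simp [sgn, hi₀]
      exact eval_mem_polRel e sgn i₀
    · simp [hi₀]
  · rintro _ ⟨c, hc, rfl⟩
    exact hρ _ ((mk_mem_SPol_iff_mem_polRel_one e sgn c).2 hc) 1 (fun i => (col i).1.2)
      fun i => by simpa [sgn] using (col i).2

theorem exists_SRg_ge_rel_subset (hρ : ρ ∈ SInv (SPol Q)) (s : S) :
    ∃ T : S → Set (Fin (ρ.m + 1) → A), (⟨ρ.m, T⟩ : SRel S A) ∈ SRg Q ∧
      (∀ t, ρ.rel t ⊆ T t) ∧ T s ⊆ ρ.rel s := by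
  obtain ⟨U, hU, hρU, hU₁⟩ :=
    exists_SRg_ge_rel_one_subset ((isSRelClone_SInv _).2.2.2.2.2.2.1 s ρ hρ)
  refine ⟨(selfInterRel s ⟨ρ.m, U⟩).rel, (isSRelClone_SRg Q).2.2.2.2.2.2.2 s _ hU, ?_, ?_⟩
  · rintro t a ha t' rfl
    exact hρU t' ha
  · intro a ha
    exact one_mul s ▸ hU₁ (ha 1 (one_mul s))

end Polymorphisms

/-- **Theorem II.** For a finite monoid `S`, a finite set `A` and any set `Q` of
`S`-relations on `A`, the `S`-relational clone generated by `Q` equals the Galois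
closure `SInv (SPol Q)`. -/
theorem SRg_eq_SInv_SPol {S A : Type*} [Monoid S] [Fintype S] [Fintype A]
    (Q : Set (SRel S A)) :
    SRg Q = SInv (SPol Q) := by
  refine (SRg_subset_SInv_SPol Q).antisymm fun ρ hρ => ?_
  choose T hT hρT hTρ using exists_SRg_ge_rel_subset hρ
  refine SRel.mk_mem_of_rel_eq ((isSRelClone_SRg Q).iInter_mem T hT) fun s => ?_
  show ⋂ s', T s' s = ρ.rel s
  exact Subset.antisymm (fun a ha => hTρ s (mem_iInter.1 ha s))
    fun a ha => mem_iInter.2 fun s' => hρT s' s ha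

end SPreclone
end

section
/- Let S be a finite monoid and A a finite set. For every set Q ⊆ SRel(A) of S-relations on A, the set SPol Q of all S-polymorphisms of Q is an S-preclone. -/
namespace SPreclone

section

variable {S A : Type*} [Monoid S] {f g : SOp S A} {ρ : SRel S A}

theorem sPreserves_idOp (ρ : SRel S A) : SPreserves (idOp S A) ρ := fun s r hr =>
  (one_mul s ▸ hr 0 : r 0 ∈ ρ.rel s)

theorem SPreserves.of_substitution {f' : SOp S A} (hf : SPreserves f ρ)
    (σ : Fin (f.n + 1) → Fin (f'.n + 1)) (hsgn : ∀ j, f'.sgn (σ j) = f.sgn j)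
    (hfn : ∀ x, f'.fn x = f.fn (x ∘ σ)) : SPreserves f' ρ := fun s r hr => by
  simp only [hfn]
  exact hf s (r ∘ σ) fun j => hsgn j ▸ hr (σ j)

theorem SPreserves.cyc (hf : SPreserves f ρ) : SPreserves (cycOp f) ρ :=
  hf.of_substitution (fun j => (j + 1 : Fin (f.n + 1))) (by simp [cycOp]) fun _ => rfl

theorem SPreserves.swap (hf : SPreserves f ρ) : SPreserves (swapOp f) ρ :=
  hf.of_substitution (Equiv.swap 0 1) (by simp [swapOp]) fun _ => rfl

theorem SPreserves.nabla (t : S) (hf : SPreserves f ρ) : SPreserves (nablaOp t f) ρ :=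
  hf.of_substitution Fin.succ (by simp [nablaOp]) fun _ => rfl

theorem SPreserves.delta (hf : SPreserves f ρ) : SPreserves (deltaOp f) ρ := by
  obtain ⟨_ | m, fn, sgn⟩ := f
  · exact hf
  · dsimp only [deltaOp]
    split_ifs with hsgn
    · refine hf.of_substitution (fun j : Fin (m + 2) => (⟨j.val - 1, by omega⟩ : Fin (m + 1)))
        (fun j => ?_) fun _ => rfl
      rcases j with ⟨_ | k, hk⟩
      · exact hsgn.symm
      · rfl
    · exact hf

/-- `f` is applied to `g(r₁, …, r_m), r_{m+1}, …`; the first argument lies in `ρ_{s₁ s}`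
because the first `m` signa of `f ∘ g` are `s'ᵢ s₁`. -/
theorem SPreserves.comp (hf : SPreserves f ρ) (hg : SPreserves g ρ) :
    SPreserves (compOp f g) ρ := by
  intro s r hr
  have hn : (compOp f g).n = g.n + f.n := rfl
  have hhead : (fun k => g.fn fun i => r ⟨i, by omega⟩ k) ∈ ρ.rel (f.sgn 0 * s) :=
    hg _ _ fun i => by simpa [compOp, mul_assoc, Fin.is_le] using hr ⟨i, by omega⟩
  refine hf s (fun i k => Fin.cases (motive := fun _ => A) (g.fn fun i => r ⟨i, by omega⟩ k)
    (fun j => r ⟨g.n + 1 + j, by omega⟩ k) i) (Fin.cases ?_ fun j => ?_)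
  · simpa using hhead
  · have hsgn : (compOp f g).sgn ⟨g.n + 1 + j, by omega⟩ = f.sgn j.succ := by
      simp only [compOp, show ¬ g.n + 1 + j.val < g.n + 1 by omega, dite_false]
      congr 1
      ext
      simp only [Fin.val_succ]
      omega
    simpa [hsgn] using hr ⟨g.n + 1 + j, by omega⟩

end

theorem isSPreclone_SPol_general {S A : Type*} [Monoid S]
    (Q : Set (SRel S A)) :
    IsSPreclone (SPol Q) :=
  ⟨fun ρ _ => sPreserves_idOp ρ,
    fun _ hf ρ hρ => (hf ρ hρ).cyc,
    fun _ hf ρ hρ => (hf ρ hρ).swap,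
    fun t _ hf ρ hρ => (hf ρ hρ).nabla t,
    fun _ hf ρ hρ => (hf ρ hρ).delta,
    fun _ hf _ hg ρ hρ => (hf ρ hρ).comp (hg ρ hρ)⟩

/-- For every set `Q` of `S`-relations, `SPol Q` is an `S`-preclone. -/
theorem isSPreclone_SPol {S A : Type*} [Monoid S] [Fintype S] [Fintype A]
    (Q : Set (SRel S A)) :
    IsSPreclone (SPol Q) :=
  isSPreclone_SPol_general Q

end SPreclone
end

section
/- Let S be a finite monoid and A a finite set with at least two elements. Then SJ_A = SPol(SRel(A)) and SD_A = SInv(SOp(A)); that is, the trivial S-operations (trivial projections) are exactly those S-operations which S-preserve every S-relation, and the S-diagonals are exactly those S-relations which are invariant for every S-operation. -/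
namespace SPreclone

/-- The trivial `S`-operations are exactly those `S`-preserving every `S`-relation,
and the `S`-diagonals are exactly those `S`-relations invariant for every
`S`-operation: `SJ_A = SPol (SRel A)` and `SD_A = SInv (SOp A)`. -/
theorem SJ_eq_SPol_univ_and_SD_eq_SInv_univ {S A : Type*} [Monoid S] [Fintype S]
    [Fintype A] [Nontrivial A] :
    SJ S A = SPol (Set.univ : Set (SRel S A)) ∧
    SD S A = SInv (Set.univ : Set (SOp S A)) := by
  classical
  constructor
  · ext f
    constructor
    · rintro ⟨i, hsi, hfx⟩ ρ - s r hr
      have hri := hr i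
      rw [hsi, one_mul] at hri
      have heq : (fun j => f.fn fun i' => r i' j) = r i := by
        funext j; rw [hfx]
      rw [heq]; exact hri
    · intro hf
      have hN : 1 ≤ Fintype.card (Fin (f.n + 1) → A) := Fintype.card_pos
      let e : Fin (Fintype.card (Fin (f.n + 1) → A) - 1 + 1) ≃ (Fin (f.n + 1) → A) :=
        (finCongr (by omega)).trans (Fintype.equivFin _).symm
      let χ : SRel S A := ⟨Fintype.card (Fin (f.n + 1) → A) - 1,
        fun t => { c | ∃ i, f.sgn i = t ∧ c = fun z => e z i }⟩
      have hpres := hf χ (Set.mem_univ _) 1 (fun i z => e z i) ?_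
      · obtain ⟨i, hi, hc⟩ := hpres
        refine ⟨i, hi, fun x => ?_⟩
        have := congrFun hc (e.symm x)
        have hx : (fun i' => e (e.symm x) i') = x := by
          funext i'; rw [Equiv.apply_symm_apply]
        rw [hx] at this
        rw [this, Equiv.apply_symm_apply]
      · intro i
        exact ⟨i, by rw [mul_one], rfl⟩
  · ext ρ
    constructor
    · rintro ⟨hdiag, hmono⟩ f - s r hr
      have hrs : ∀ i, r i ∈ ρ.rel s := by
        intro i
        refine hmono (f.sgn i * s) s ?_ (hr i)
        rintro x ⟨u, rfl⟩
        exact ⟨u * f.sgn i, by rw [mul_assoc]⟩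
      rcases hdiag s with h0 | ⟨ε, _, hεeq⟩
      · exact absurd (hrs 0) (by simp [h0])
      · rw [hεeq]
        intro i j hij
        simp only
        congr 1
        funext z
        have hz := hrs z
        rw [hεeq] at hz
        exact hz i j hij
    · intro hρ
      constructor
      · intro s
        by_cases hne : (ρ.rel s).Nonempty
        · right
          refine ⟨fun i j => ∀ a ∈ ρ.rel s, a i = a j,
            ⟨fun i a _ => rfl, fun h a ha => (h a ha).symm,
             fun h1 h2 a ha => (h1 a ha).trans (h2 a ha)⟩, ?_⟩
          apply Set.eq_of_subset_of_subset
          · intro a ha i j hij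
            exact hij a ha
          · intro b hb
            haveI : Fintype (ρ.rel s) := Fintype.ofFinite _
            haveI : Nonempty (ρ.rel s) := hne.to_subtype
            have hk : 1 ≤ Fintype.card (ρ.rel s) := Fintype.card_pos
            let e : Fin (Fintype.card (ρ.rel s) - 1 + 1) ≃ (ρ.rel s) :=
              (finCongr (by omega)).trans (Fintype.equivFin _).symm
            let F : (Fin (Fintype.card (ρ.rel s) - 1 + 1) → A) → A := fun x =>
              if h : ∃ j, x = fun z => (e z).val j then b h.choose else b 0
            have hF : ∀ j, F (fun z => (e z).val j) = b j := by
              intro j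
              have h : ∃ j', (fun z => (e z).val j) = fun z => (e z).val j' := ⟨j, rfl⟩
              show (if h : ∃ j', (fun z => (e z).val j) = fun z => (e z).val j'
                  then b h.choose else b 0) = b j
              rw [dif_pos h]
              apply hb
              intro a ha
              have hc := congrFun h.choose_spec (e.symm ⟨a, ha⟩)
              simp only [Equiv.apply_symm_apply] at hc
              exact hc.symm
            have := hρ ⟨Fintype.card (ρ.rel s) - 1, F, fun _ => 1⟩ (Set.mem_univ _) s
              (fun z => (e z).val) ?_
            · have heq : (fun j => F fun z => (e z).val j) = b := by
                funext j; exact hF j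
              rwa [heq] at this
            · intro i
              rw [one_mul]
              exact (e i).2
        · left
          exact Set.not_nonempty_iff_eq_empty.mp hne
      · intro s t hst
        obtain ⟨u, hu⟩ := hst ⟨1, (one_mul s).symm⟩
        intro a ha
        have := hρ ⟨0, fun x => x 0, fun _ => u⟩ (Set.mem_univ _) t (fun _ => a) ?_
        · simpa using this
        · intro i
          simp only
          rw [← hu]
          exact ha

end SPreclone
end

section
/- Let S be a finite monoid and A a finite set. For every F ⊆ SOp(A), the clone generated by the set F̊ of underlying operations of F (obtained by ignoring all signa) equals Pol{ σ ∈ Rel(A) : (σ)_{s∈S} ∈ SInv F }, where (σ)_{s∈S} denotes the S-relation whose every component equals σ. -/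
namespace SPreclone

theorem isClone_UPol {A : Type*} (R : Set (URel A)) : IsClone (UPol R) := by
  constructor
  · intro n i σ _ r hr
    exact hr i
  · intro f hf m g hg σ hσ r hr
    exact hf σ hσ (fun i j => g i fun k => r k j) (fun i => hg i σ hσ r hr)

theorem isClone_cloneGen {A : Type*} (G : Set (UOp A)) : IsClone (CloneGen G) := by
  constructor
  · intro n i C hC
    exact hC.1.1 n i
  · intro f hf m g hg C hC
    exact hC.1.2 f (hf C hC) m g (fun i => hg i C hC)

theorem subset_cloneGen {A : Type*} (G : Set (UOp A)) : G ⊆ CloneGen G :=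
  fun _ hg _ hC => hC.2 hg

/-- The clone generated by the underlying operations of `F` (ignoring all signa)
equals `Pol { σ ∣ (σ)_{s ∈ S} ∈ SInv F }`. -/
theorem cloneGen_underlying_eq_Pol {S A : Type*} [Monoid S] [Fintype S] [Fintype A]
    (F : Set (SOp S A)) :
    CloneGen { g : UOp A | ∃ f ∈ F, g = ⟨f.n, f.fn⟩ } =
      UPol { σ : URel A | (⟨σ.m, fun _ : S => σ.rel⟩ : SRel S A) ∈ SInv F } := by
  set G : Set (UOp A) := { g : UOp A | ∃ f ∈ F, g = ⟨f.n, f.fn⟩ } with hG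
  apply Set.Subset.antisymm
  · intro t ht
    refine ht _ ⟨isClone_UPol _, ?_⟩
    rintro g ⟨f, hf, rfl⟩ σ hσ r hr
    have := hσ f hf 1 r (fun i => hr i)
    exact this
  · rcases isEmpty_or_nonempty A with hA | hA
    · intro h _
      have hh : h = ⟨h.n, fun x => x 0⟩ := by
        obtain ⟨n, fn⟩ := h
        congr 1
        funext x
        exact (hA.false (x 0)).elim
      rw [hh]
      exact (isClone_cloneGen G).1 h.n 0
    · intro h hh
      obtain ⟨n, hfn⟩ := h
      have hNpos : 0 < Fintype.card (Fin (n + 1) → A) := Fintype.card_pos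
      obtain ⟨m, hm⟩ : ∃ m, m + 1 = Fintype.card (Fin (n + 1) → A) :=
        ⟨Fintype.card (Fin (n + 1) → A) - 1, by omega⟩
      let e : Fin (m + 1) ≃ (Fin (n + 1) → A) :=
        (finCongr hm).trans (Fintype.equivFin _).symm
      set σrel : Set (Fin (m + 1) → A) :=
        { c | ∃ t : (Fin (n + 1) → A) → A,
            (⟨n, t⟩ : UOp A) ∈ CloneGen G ∧ c = fun z => t (e z) } with hσrel
      have hσInv : (⟨m, fun _ : S => σrel⟩ : SRel S A) ∈ SInv F := by
        intro f hf s r hr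
        simp only [hσrel, Set.mem_setOf_eq] at hr ⊢
        choose t ht hteq using hr
        refine ⟨fun x => f.fn fun i => t i x, ?_, ?_⟩
        · exact (isClone_cloneGen G).2 ⟨f.n, f.fn⟩
            (subset_cloneGen G ⟨f, hf, rfl⟩) n t ht
        · funext z
          show f.fn (fun i => r i z) = f.fn fun i => t i (e z)
          congr 1
          funext i
          exact congrFun (hteq i) z
      have hpres : UPreserves ⟨n, hfn⟩ ⟨m, σrel⟩ := hh ⟨m, σrel⟩ hσInv
      have hrow : ∀ i : Fin (n + 1), (fun z => e z i) ∈ σrel :=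
        fun i => ⟨fun x => x i, (isClone_cloneGen G).1 n i, rfl⟩
      obtain ⟨t, htC, hteq⟩ := hpres (fun i z => e z i) hrow
      have hft : hfn = t := by
        funext x
        have h1 := congrFun hteq (e.symm x)
        simp only [Equiv.apply_symm_apply] at h1
        exact h1
      rw [show (⟨n, hfn⟩ : UOp A) = ⟨n, t⟩ from by rw [hft]]
      exact htC

end SPreclone
end

section
/- Let S be a finite monoid, A a finite set, F ⊆ SOp(A), and ρ an m-ary S-relation. Then ζ Γ_F(ρ) = Γ_F(ζ ρ), τ Γ_F(ρ) = Γ_F(τ ρ), and for all indices z_1, …, z_t ∈ {1,…,m}, pr_{z_1,…,z_t}(Γ_F(ρ)) = Γ_F(pr_{z_1,…,z_t}(ρ)). -/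
namespace SPreclone

section GammaComm

variable {S A : Type*} [Monoid S]

private lemma mk_eq {m : ℕ} {f g : S → Set (Fin (m + 1) → A)} (h : ∀ s, f s = g s) :
    (⟨m, f⟩ : SRel S A) = ⟨m, g⟩ := by
  have hfg : f = g := funext h
  subst hfg; rfl

lemma mem_Gamma {F : Set (SOp S A)} {ρ : SRel S A} {s : S} {a : Fin (ρ.m + 1) → A} :
    a ∈ (Gamma F ρ).rel s ↔ ∀ g : S → Set (Fin (ρ.m + 1) → A),
      (⟨ρ.m, g⟩ : SRel S A) ∈ SInv F → (∀ u, ρ.rel u ⊆ g u) → a ∈ g s := by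
  constructor
  · intro h g hg hsub
    exact Set.mem_iInter₂.1 h g ⟨hg, hsub⟩
  · intro h
    exact Set.mem_iInter₂.2 fun g hg => h g hg.1 hg.2

lemma Gamma_mem_SInv (F : Set (SOp S A)) (ρ : SRel S A) : Gamma F ρ ∈ SInv F := by
  intro f hf s r hr
  refine mem_Gamma.2 fun g hg hsub => ?_
  exact hg f hf s r fun i => mem_Gamma.1 (hr i) g hg hsub

lemma subset_Gamma (F : Set (SOp S A)) (ρ : SRel S A) (u : S) :
    ρ.rel u ⊆ (Gamma F ρ).rel u :=
  fun _ ha => mem_Gamma.2 fun _ _ hsub => hsub u ha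

lemma Gamma_le {F : Set (SOp S A)} {ρ : SRel S A} {g : S → Set (Fin (ρ.m + 1) → A)}
    (hg : (⟨ρ.m, g⟩ : SRel S A) ∈ SInv F) (hsub : ∀ u, ρ.rel u ⊆ g u) (s : S) :
    (Gamma F ρ).rel s ⊆ g s :=
  fun _ ha => mem_Gamma.1 ha g hg hsub

/-- Image under a coordinate map preserves invariance. -/
lemma SInv_image {F : Set (SOp S A)} {m t : ℕ} {R : S → Set (Fin (m + 1) → A)}
    (hR : (⟨m, R⟩ : SRel S A) ∈ SInv F) (z : Fin (t + 1) → Fin (m + 1)) :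
    (⟨t, fun s => { b | ∃ a ∈ R s, b = fun j => a (z j) }⟩ : SRel S A) ∈ SInv F := by
  intro f hf s r hr
  choose a ha heq using hr
  refine ⟨fun j => f.fn fun i => a i j, hR f hf s a ha, ?_⟩
  funext j
  simp only
  congr 1
  funext i
  rw [heq i]

/-- Preimage under a coordinate map preserves invariance. -/
lemma SInv_preimage {F : Set (SOp S A)} {m t : ℕ} {R : S → Set (Fin (t + 1) → A)}
    (hR : (⟨t, R⟩ : SRel S A) ∈ SInv F) (z : Fin (t + 1) → Fin (m + 1)) :
    (⟨m, fun s => { a | (fun j => a (z j)) ∈ R s }⟩ : SRel S A) ∈ SInv F := by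
  intro f hf s r hr
  exact hR f hf s (fun i j => r i (z j)) hr

lemma prMulti_Gamma (F : Set (SOp S A)) (ρ : SRel S A) {t : ℕ}
    (z : Fin (t + 1) → Fin (ρ.m + 1)) :
    prMulti (Gamma F ρ) z = Gamma F (prMulti ρ z) := by
  show (⟨t, fun s => { b | ∃ a ∈ (Gamma F ρ).rel s, b = fun j => a (z j) }⟩ : SRel S A)
      = ⟨t, (Gamma F (prMulti ρ z)).rel⟩
  apply mk_eq
  intro s
  apply Set.Subset.antisymm
  · rintro b ⟨a, ha, rfl⟩
    have hG : (⟨ρ.m, fun u => { a : Fin (ρ.m + 1) → A |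
        (fun j => a (z j)) ∈ (Gamma F (prMulti ρ z)).rel u }⟩ : SRel S A) ∈ SInv F :=
      SInv_preimage (Gamma_mem_SInv F (prMulti ρ z)) z
    have hsub : ∀ u, ρ.rel u ⊆
        { a : Fin (ρ.m + 1) → A | (fun j => a (z j)) ∈ (Gamma F (prMulti ρ z)).rel u } := by
      intro u x hx
      exact subset_Gamma F (prMulti ρ z) u ⟨x, hx, rfl⟩
    exact mem_Gamma.1 ha _ hG hsub
  · refine Gamma_le (ρ := prMulti ρ z)
      (g := fun s => { b | ∃ a ∈ (Gamma F ρ).rel s, b = fun j => a (z j) })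
      (SInv_image (Gamma_mem_SInv F ρ) z) ?_ s
    rintro u b ⟨x, hx, rfl⟩
    exact ⟨x, subset_Gamma F ρ u hx, rfl⟩

lemma cyc_eq_pr (σ : SRel S A) : cycRel σ = prMulti σ (fun j => j + 1) := by
  apply mk_eq
  intro s
  ext b
  constructor
  · intro hb
    exact ⟨fun i => b (i - 1), hb, by funext j; simp⟩
  · rintro ⟨a, ha, rfl⟩
    show (fun i => a (i - 1 + 1)) ∈ σ.rel s
    simpa using ha

lemma swap_eq_pr (σ : SRel S A) :
    swapRel σ = prMulti σ (fun j => Equiv.swap 0 1 j) := by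
  apply mk_eq
  intro s
  ext b
  constructor
  · intro hb
    exact ⟨fun i => b (Equiv.swap 0 1 i), hb, by
      funext j; simp [Equiv.swap_apply_self]⟩
  · rintro ⟨a, ha, rfl⟩
    show (fun i => a (Equiv.swap 0 1 (Equiv.swap 0 1 i))) ∈ σ.rel s
    simpa [Equiv.swap_apply_self] using ha

end GammaComm

/-- `Γ_F` commutes with the cyclic shift `ζ`, the transposition `τ`, and arbitrary
projections `pr_{z₁,…,z_t}`. -/
theorem Gamma_comm_ops {S A : Type*} [Monoid S] [Fintype S] [Fintype A]
    (F : Set (SOp S A)) (ρ : SRel S A) :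
    cycRel (Gamma F ρ) = Gamma F (cycRel ρ) ∧
    swapRel (Gamma F ρ) = Gamma F (swapRel ρ) ∧
    ∀ (t : ℕ) (z : Fin (t + 1) → Fin (ρ.m + 1)),
      prMulti (Gamma F ρ) z = Gamma F (prMulti ρ z) := by
  refine ⟨?_, ?_, fun t z => prMulti_Gamma F ρ z⟩
  · exact (cyc_eq_pr (Gamma F ρ)).trans
      ((prMulti_Gamma F ρ (fun j => j + 1)).trans
        (congrArg (Gamma F) (cyc_eq_pr ρ).symm))
  · exact (swap_eq_pr (Gamma F ρ)).trans
      ((prMulti_Gamma F ρ (fun j => Equiv.swap 0 1 j)).trans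
        (congrArg (Gamma F) (swap_eq_pr ρ).symm))

end SPreclone
end
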